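/- For every ν ∈ ℰ(A') and ν-a.e. z ∈ A'^ℤ, the mean lengthening W_α^ν := lim_{n→∞} |S(z_1…z_n)|/n exists and equals 1 + ν(α); moreover, for every μ ∈ ℰ(A), W_α^{𝒢μ} = Z_{xy}^μ, i.e., 1 + 𝒢μ(α) equals the inverse mean shortening of μ under G. -/

import Mathlib

open MeasureTheory Filter Topology

instance optionMeasurableSpace {A : Type*} [MeasurableSpace A] : MeasurableSpace (Option A) :=
  MeasurableSpace.comap (Option.elim' (Sum.inr ()) Sum.inl : Option A → A ⊕ Unit) inferInstance

/-- Left-to-right non-overlapping substitution of the pair `x y` by a new symbol `none`. -/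
def pairSubst {A : Type*} [DecidableEq A] (x y : A) : List A → List (Option A)
  | [] => []
  | [a] => [some a]
  | a :: b :: l =>
      if a = x ∧ b = y then none :: pairSubst x y l
      else some a :: pairSubst x y (b :: l)

/-- Substitution of every occurrence of `none` by the pair `x y`. -/
def pairExpand {A : Type*} (x y : A) : List (Option A) → List A
  | [] => []
  | none :: l => x :: y :: pairExpand x y l
  | some a :: l => a :: pairExpand x y l

/-- Number of (possibly overlapping) occurrences of `s` as a contiguous subword of `r`. -/
def occ {B : Type*} [DecidableEq B] (s r : List B) : ℕ :=
  (List.range r.length).countP (fun i => decide (s <+: r.drop i))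

/-- The word `w₁ … wₙ` read out of a two-sided sequence. -/
def wordOf {B : Type*} (w : ℤ → B) (n : ℕ) : List B :=
  (List.range n).map (fun i => w (i : ℤ))

/-- The cylinder set determined by a word. -/
def cyl {B : Type*} (s : List B) : Set (ℤ → B) :=
  {x | ∀ i : Fin s.length, x ((i : ℕ) : ℤ) = s.get i}

/-- The shift map on two-sided sequences. -/
def shift {B : Type*} : (ℤ → B) → (ℤ → B) := fun x i => x (i + 1)

/-- The `n`-block entropy of a measure on `B^ℤ` (base-2 logarithms). -/
noncomputable def blockH {B : Type*} [Fintype B] [MeasurableSpace B]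
    (μ : Measure (ℤ → B)) (n : ℕ) : ℝ :=
  -∑ z : Fin n → B,
    (μ {x : ℤ → B | ∀ i : Fin n, x ((i : ℕ) : ℤ) = z i}).toReal *
      Real.logb 2 ((μ {x : ℤ → B | ∀ i : Fin n, x ((i : ℕ) : ℤ) = z i}).toReal)

/-- `k`-Markov property (stated with cross-multiplied conditional probabilities). -/
def IsKMarkov {B : Type*} [MeasurableSpace B] (μ : Measure (ℤ → B)) (k : ℕ) : Prop :=
  ∀ w : List B, k ≤ w.length → μ (cyl w) ≠ 0 → ∀ a : B,
    μ (cyl (w ++ [a])) * μ (cyl (w.drop (w.length - k))) =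
      μ (cyl (w.drop (w.length - k) ++ [a])) * μ (cyl w)

/-! Both parts are letter counting. Expanding `α` adds one letter per `α`, so
`|S(z₁…zₙ)| / n = 1 + #{α ⊆ z₁…zₙ} / n`, and the frequency of `α` tends `ν`-a.e. to `ν(α)` by
Birkhoff's ergodic theorem applied to the indicator of the cylinder `[α]`. Dually, contracting `xy`
to `α` removes one letter per `α`, so `n / |G(w₁…wₙ)| = 1 + #{α ⊆ G(w₁…wₙ)} / |G(w₁…wₙ)|`, whose
right side tends to `1 + 𝒢μ(α)` by the definition of `𝒢μ`.

The ergodic theorem is proved for `[0, 1]`-valued observables by the Katznelson–Weiss argument: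
the `limsup` of the Birkhoff averages is invariant, hence a.e. a constant `c`; cutting an orbit
greedily into blocks of bounded length on which the average is almost `c`, and integrating,
gives `c ≤ ∫ g`. Applied to `1 - g`, this also bounds the `liminf` from below. -/

lemma limsup_add_of_tendsto_zero {u v : ℕ → ℝ} (hu : IsBoundedUnder (· ≤ ·) atTop u)
    (hu' : IsBoundedUnder (· ≥ ·) atTop u) (hv : Tendsto v atTop (𝓝 0)) :
    limsup (u + v) atTop = limsup u atTop := by
  have hv₁ := hv.isBoundedUnder_le
  have hv₂ := hv.isBoundedUnder_ge
  apply le_antisymm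
  · simpa [hv.limsup_eq] using limsup_add_le hu' hu hv₂.isCoboundedUnder_le hv₁
  · simpa [hv.liminf_eq] using le_limsup_add hu hu'.isCoboundedUnder_le hv₁ hv₂

section Birkhoff

variable {X : Type*} {T : X → X} {g : X → ℝ}

lemma birkhoffSum_mem_Icc (hg : ∀ x, g x ∈ Set.Icc (0 : ℝ) 1) (n : ℕ) (x : X) :
    birkhoffSum T g n x ∈ Set.Icc (0 : ℝ) n :=
  ⟨Finset.sum_nonneg fun k _ => (hg _).1, by
    simpa [birkhoffSum] using
      Finset.sum_le_sum fun k (_ : k ∈ Finset.range n) => (hg (T^[k] x)).2⟩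

lemma birkhoffAverage_mem_Icc (hg : ∀ x, g x ∈ Set.Icc (0 : ℝ) 1) (n : ℕ) (x : X) :
    birkhoffAverage ℝ T g n x ∈ Set.Icc (0 : ℝ) 1 := by
  obtain ⟨h₀, h₁⟩ := birkhoffSum_mem_Icc (T := T) hg n x
  rw [birkhoffAverage, smul_eq_mul]
  exact ⟨by positivity, inv_mul_le_one_of_le₀ h₁ n.cast_nonneg⟩

lemma le_birkhoffSum_of_forall_exists_block (hg : ∀ x, g x ∈ Set.Icc (0 : ℝ) 1)
    {r : ℝ} {M : ℕ} (hblock : ∀ z, ∃ k ∈ Finset.Icc 1 M, r * k ≤ birkhoffSum T g k z)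
    (N : ℕ) (z : X) :
    r * N - M ≤ birkhoffSum T g N z := by
  induction N using Nat.strong_induction_on generalizing z with
  | _ N ih =>
  obtain ⟨k, hk, hrk⟩ := hblock z
  obtain ⟨hk₁, hkM⟩ := Finset.mem_Icc.1 hk
  by_cases hNk : N < k
  · have hr : r ≤ 1 := by
      have hk₀ : (0 : ℝ) < k := by exact_mod_cast hk₁
      nlinarith [(birkhoffSum_mem_Icc (T := T) hg k z).2]
    have hNM : (N : ℝ) ≤ M := by exact_mod_cast (hNk.trans_le hkM).le
    nlinarith [(birkhoffSum_mem_Icc (T := T) hg N z).1, N.cast_nonneg (α := ℝ)]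
  · obtain ⟨m, rfl⟩ := Nat.exists_eq_add_of_le (not_lt.1 hNk)
    have := ih m (by omega) (T^[k] z)
    rw [birkhoffSum_add]
    push_cast
    linarith

lemma limsup_birkhoffAverage_apply (hg : ∀ x, g x ∈ Set.Icc (0 : ℝ) 1) (x : X) :
    limsup (birkhoffAverage ℝ T g · (T x)) atTop =
      limsup (birkhoffAverage ℝ T g · x) atTop := by
  have hbdd : Bornology.IsBounded (Set.range g) :=
    Metric.isBounded_Icc (0 : ℝ) 1 |>.subset (Set.range_subset_iff.2 hg)
  convert limsup_add_of_tendsto_zero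
    (isBoundedUnder_of ⟨1, fun n => (birkhoffAverage_mem_Icc hg n x).2⟩)
    (isBoundedUnder_of ⟨0, fun n => (birkhoffAverage_mem_Icc hg n x).1⟩)
    (tendsto_birkhoffAverage_apply_sub_birkhoffAverage' ℝ hbdd T x) using 2
  ext n
  simp

lemma birkhoffAverage_const_sub {c : ℝ} {n : ℕ} (hn : n ≠ 0) (x : X) :
    birkhoffAverage ℝ T (fun y => c - g y) n x = c - birkhoffAverage ℝ T g n x := by
  have := congrFun (congrFun
    (birkhoffAverage_sub (R := ℝ) (f := T) (g := fun _ => c) (g' := g)) n) x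
  rwa [Pi.sub_apply, Pi.sub_apply,
    birkhoffAverage_of_comp_eq (R := ℝ) (g := fun _ : X => c) rfl (Nat.cast_ne_zero.2 hn)] at this

variable [MeasurableSpace X] {μ : Measure X}

lemma MeasureTheory.MeasurePreserving.integrable_birkhoffSum (hT : MeasurePreserving T μ μ)
    (hg : Integrable g μ) (n : ℕ) : Integrable (birkhoffSum T g n) μ :=
  integrable_finsetSum _ fun k _ => (hT.iterate k).integrable_comp hg.1 |>.2 hg

lemma MeasureTheory.MeasurePreserving.integral_birkhoffSum (hT : MeasurePreserving T μ μ)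
    (hg : Integrable g μ) (n : ℕ) : ∫ x, birkhoffSum T g n x ∂μ = n * ∫ x, g x ∂μ := by
  have hcomp (k : ℕ) : ∫ x, g (T^[k] x) ∂μ = ∫ x, g x ∂μ := by
    rw [← integral_map (hT.iterate k).aemeasurable (by rw [(hT.iterate k).map_eq]; exact hg.1),
      (hT.iterate k).map_eq]
  have hint (k : ℕ) : Integrable (fun x => g (T^[k] x)) μ :=
    (hT.iterate k).integrable_comp hg.1 |>.2 hg
  simp only [birkhoffSum]
  rw [integral_finsetSum _ fun k _ => hint k]
  simp [hcomp]

lemma le_integral_of_forall_le_birkhoffSum [IsProbabilityMeasure μ]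
    (hT : MeasurePreserving T μ μ) (hg : Integrable g μ) {r C : ℝ}
    (h : ∀ N z, r * N - C ≤ birkhoffSum T g N z) :
    r ≤ ∫ x, g x ∂μ := by
  have hbound : ∀ N : ℕ, 0 < N → r ≤ ∫ x, g x ∂μ + C / N := by
    intro N hN
    have hNpos : (0 : ℝ) < N := by exact_mod_cast hN
    have hint : r * N - C ≤ N * ∫ x, g x ∂μ := by
      rw [← hT.integral_birkhoffSum hg]
      simpa using integral_mono (integrable_const _) (hT.integrable_birkhoffSum hg N) (h N)
    rw [← sub_le_iff_le_add', le_div_iff₀ hNpos]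
    linarith
  have hlim : Tendsto (fun N : ℕ => ∫ x, g x ∂μ + C / N) atTop (𝓝 (∫ x, g x ∂μ)) := by
    simpa using tendsto_const_nhds.add (tendsto_const_div_atTop_nhds_zero_nat C)
  exact ge_of_tendsto hlim ((eventually_gt_atTop 0).mono hbound)

lemma measurable_birkhoffAverage (hT : Measurable T) (hg : Measurable g) (n : ℕ) :
    Measurable (birkhoffAverage ℝ T g n) :=
  ((Finset.measurable_sum _ fun k _ => hg.comp (hT.iterate k)).const_smul (n : ℝ)⁻¹ :)

lemma integrable_of_mem_Icc [IsFiniteMeasure μ] (hgm : Measurable g)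
    (hg : ∀ x, g x ∈ Set.Icc (0 : ℝ) 1) : Integrable g μ :=
  .of_bound hgm.aestronglyMeasurable 1 <| .of_forall fun x => by
    rw [Real.norm_of_nonneg (hg x).1]; exact (hg x).2

lemma integral_max_indicator_one_le [IsFiniteMeasure μ] (hgm : Measurable g)
    (hg : ∀ x, g x ∈ Set.Icc (0 : ℝ) 1) {s : Set X} (hs : MeasurableSet s) :
    ∫ z, max (g z) (s.indicator 1 z) ∂μ ≤ ∫ z, g z ∂μ + μ.real s := by
  have hind : Integrable (s.indicator 1) μ := (integrable_const (1 : ℝ)).indicator hs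
  have hmax : Integrable (fun z => max (g z) (s.indicator 1 z)) μ :=
    (integrable_of_mem_Icc hgm hg).sup hind
  rw [← integral_indicator_one hs, ← integral_add (integrable_of_mem_Icc hgm hg) hind]
  refine integral_mono hmax ((integrable_of_mem_Icc hgm hg).add hind) fun z => ?_
  exact max_le_add_of_nonneg (hg z).1 (Set.indicator_nonneg (fun _ _ => by simp) z)

lemma measurableSet_setOf_forall_birkhoffAverage_lt (hT : Measurable T) (hgm : Measurable g)
    (b : ℝ) (M : ℕ) :
    MeasurableSet {z | ∀ n ∈ Finset.Icc 1 M, birkhoffAverage ℝ T g n z < b} := by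
  simp only [Set.ofPred_forall]
  exact .iInter fun n => .iInter fun _ =>
    measurableSet_lt (measurable_birkhoffAverage hT hgm n) measurable_const

lemma tendsto_measure_setOf_forall_birkhoffAverage_lt [IsFiniteMeasure μ] (hT : Measurable T)
    (hgm : Measurable g) (hg : ∀ x, g x ∈ Set.Icc (0 : ℝ) 1) {b : ℝ}
    (hb : ∀ᵐ x ∂μ, b < limsup (birkhoffAverage ℝ T g · x) atTop) :
    Tendsto (fun M : ℕ => μ {z | ∀ n ∈ Finset.Icc 1 M, birkhoffAverage ℝ T g n z < b})
      atTop (𝓝 0) := by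
  set B : ℕ → Set X := fun M => {z | ∀ n ∈ Finset.Icc 1 M, birkhoffAverage ℝ T g n z < b}
  have hanti : Antitone B := fun M M' h z hz n hn => hz n (Finset.Icc_subset_Icc le_rfl h hn)
  have hnull : μ (⋂ M, B M) = 0 := by
    rw [measure_eq_zero_iff_ae_notMem]
    filter_upwards [hb] with x hx hmem
    have hcobdd : IsCoboundedUnder (· ≤ ·) atTop (birkhoffAverage ℝ T g · x) :=
      isCoboundedUnder_le_of_le atTop fun n => (birkhoffAverage_mem_Icc hg n x).1
    obtain ⟨n, hn, hlt⟩ :=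
      ((eventually_ge_atTop 1).and_frequently (frequently_lt_of_lt_limsup hcobdd hx)).exists
    exact (Set.mem_iInter.1 hmem n n (Finset.mem_Icc.2 ⟨hn, le_rfl⟩)).not_gt hlt
  rw [← hnull]
  exact tendsto_measure_iInter_atTop
    (fun M => (measurableSet_setOf_forall_birkhoffAverage_lt hT hgm b M).nullMeasurableSet) hanti
    ⟨0, measure_ne_top μ _⟩

lemma le_integral_of_ae_le_limsup_birkhoffAverage [IsProbabilityMeasure μ]
    (hT : MeasurePreserving T μ μ) (hgm : Measurable g) (hg : ∀ x, g x ∈ Set.Icc (0 : ℝ) 1)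
    {c : ℝ} (hc : ∀ᵐ x ∂μ, c ≤ limsup (birkhoffAverage ℝ T g · x) atTop) :
    c ≤ ∫ x, g x ∂μ := by
  have hc₁ : c ≤ 1 := by
    obtain ⟨x, hx⟩ := hc.exists
    exact hx.trans <| limsup_le_of_le (isCoboundedUnder_le_of_le atTop fun n =>
      (birkhoffAverage_mem_Icc hg n x).1) (.of_forall fun n => (birkhoffAverage_mem_Icc hg n x).2)
  refine le_of_forall_pos_le_add fun ε hε => ?_
  set r := c - ε / 2 with hr_def
  set B : ℕ → Set X := fun M => {z | ∀ n ∈ Finset.Icc 1 M, birkhoffAverage ℝ T g n z < r}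
  have hB := tendsto_measure_setOf_forall_birkhoffAverage_lt hT.measurable hgm hg (b := r)
    (hc.mono fun x hx => by linarith)
  obtain ⟨M, hM₁, hM⟩ : ∃ M, 1 ≤ M ∧ μ (B M) < ENNReal.ofReal (ε / 2) :=
    ((eventually_ge_atTop 1).and (hB.eventually (gt_mem_nhds (by simpa using hε)))).exists
  have hBm : MeasurableSet (B M) :=
    measurableSet_setOf_forall_birkhoffAverage_lt hT.measurable hgm r M
  -- Points of `B M` are given weight `1`, so that every point starts a block of length at most
  -- `M` on which the average is at least `r`.
  set g' : X → ℝ := fun z => max (g z) ((B M).indicator 1 z)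
  have hg'm : Measurable g' := hgm.max (measurable_const.indicator hBm)
  have hg' (z : X) : g' z ∈ Set.Icc (0 : ℝ) 1 := by
    refine ⟨le_max_of_le_left (hg z).1, max_le (hg z).2 ?_⟩
    by_cases hz : z ∈ B M <;> simp [hz]
  have hblock (z : X) : ∃ k ∈ Finset.Icc 1 M, r * k ≤ birkhoffSum T g' k z := by
    by_cases hz : z ∈ B M
    · exact ⟨1, Finset.mem_Icc.2 ⟨le_rfl, hM₁⟩, by
        rw [Nat.cast_one, mul_one, birkhoffSum_one]
        exact (by linarith : r ≤ 1).trans (le_max_of_le_right (by simp [hz]))⟩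
    · obtain ⟨n, hn, hrn⟩ : ∃ n ∈ Finset.Icc 1 M, r ≤ birkhoffAverage ℝ T g n z := by
        simpa [B, and_assoc] using hz
      refine ⟨n, hn, ?_⟩
      have hn₀ : (0 : ℝ) < n := by exact_mod_cast (Finset.mem_Icc.1 hn).1
      rw [birkhoffAverage, smul_eq_mul, le_inv_mul_iff₀ hn₀, mul_comm] at hrn
      exact hrn.trans (Finset.sum_le_sum fun k _ => le_max_left _ _)
  have hr : r ≤ ∫ z, g' z ∂μ :=
    le_integral_of_forall_le_birkhoffSum hT (integrable_of_mem_Icc hg'm hg')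
      (le_birkhoffSum_of_forall_exists_block hg' hblock)
  have hg'_le : ∫ z, g' z ∂μ ≤ ∫ z, g z ∂μ + μ.real (B M) :=
    integral_max_indicator_one_le hgm hg hBm
  have hBε : μ.real (B M) ≤ ε / 2 := ENNReal.toReal_le_of_le_ofReal (by positivity) hM.le
  linarith

lemma exists_ae_limsup_birkhoffAverage_eq (hT : Ergodic T μ) (hgm : Measurable g)
    (hg : ∀ x, g x ∈ Set.Icc (0 : ℝ) 1) :
    ∃ c, ∀ᵐ x ∂μ, limsup (birkhoffAverage ℝ T g · x) atTop = c := by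
  have hinv : (fun x => limsup (birkhoffAverage ℝ T g · x) atTop) ∘ T =
      fun x => limsup (birkhoffAverage ℝ T g · x) atTop :=
    funext (limsup_birkhoffAverage_apply hg)
  exact hT.ae_eq_const_of_ae_eq_comp_ae
    (Measurable.limsup (measurable_birkhoffAverage hT.measurable hgm)).aestronglyMeasurable
    hinv.eventuallyEq

lemma ae_limsup_birkhoffAverage_le [IsProbabilityMeasure μ] (hT : Ergodic T μ)
    (hgm : Measurable g) (hg : ∀ x, g x ∈ Set.Icc (0 : ℝ) 1) :
    ∀ᵐ x ∂μ, limsup (birkhoffAverage ℝ T g · x) atTop ≤ ∫ x, g x ∂μ := by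
  obtain ⟨c, hc⟩ := exists_ae_limsup_birkhoffAverage_eq hT hgm hg
  have hc_le := le_integral_of_ae_le_limsup_birkhoffAverage hT.toMeasurePreserving hgm hg
    (hc.mono fun _ hx => hx.ge)
  filter_upwards [hc] with x hx
  rw [hx]
  exact hc_le

theorem Ergodic.ae_tendsto_birkhoffAverage [IsProbabilityMeasure μ] (hT : Ergodic T μ)
    (hgm : Measurable g) (hg : ∀ x, g x ∈ Set.Icc (0 : ℝ) 1) :
    ∀ᵐ x ∂μ, Tendsto (birkhoffAverage ℝ T g · x) atTop (𝓝 (∫ x, g x ∂μ)) := by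
  have hg' (x : X) : 1 - g x ∈ Set.Icc (0 : ℝ) 1 :=
    ⟨by linarith [(hg x).2], by linarith [(hg x).1]⟩
  have hbdd {f : X → ℝ} (hf : ∀ x, f x ∈ Set.Icc (0 : ℝ) 1) (x : X) :
      IsBoundedUnder (· ≤ ·) atTop (birkhoffAverage ℝ T f · x) :=
    isBoundedUnder_of ⟨1, fun n => (birkhoffAverage_mem_Icc hf n x).2⟩
  have hint : ∫ x, 1 - g x ∂μ = 1 - ∫ x, g x ∂μ := by
    rw [integral_sub (integrable_const 1) (integrable_of_mem_Icc hgm hg)]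
    simp
  filter_upwards [ae_limsup_birkhoffAverage_le hT hgm hg,
    ae_limsup_birkhoffAverage_le (g := fun x => 1 - g x) hT (measurable_const.sub hgm) hg']
    with x hup hlow
  refine tendsto_order.2 ⟨fun b hb => ?_, fun b hb =>
    eventually_lt_of_limsup_lt (hup.trans_lt hb) (hbdd hg x)⟩
  filter_upwards [eventually_lt_of_limsup_lt (hlow.trans_lt (by linarith : _ < 1 - b)) (hbdd hg' x),
    eventually_ne_atTop 0] with n hn hn₀
  rw [birkhoffAverage_const_sub hn₀] at hn
  linarith

end Birkhoff

section Words

variable {B : Type*}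

-- Any lawful `BEq` is allowed: on `Option A`, `List.count` uses `Option.instBEq`, not the
-- instance derived from the `DecidableEq` that `occ` takes.
lemma occ_singleton [DecidableEq B] [BEq B] [LawfulBEq B] (b : B) (r : List B) :
    occ [b] r = r.count b := by
  induction r with
  | nil => rfl
  | cons a r ih =>
    simp only [occ, List.length_cons, List.range_succ_eq_map, List.countP_cons, List.countP_map,
      List.drop_succ_cons, List.drop_zero, Function.comp_def] at ih ⊢
    rw [ih]
    by_cases h : a = b <;> simp [h, Ne.symm, List.cons_prefix_cons]

@[simp]
lemma length_wordOf (z : ℤ → B) (n : ℕ) : (wordOf z n).length = n := by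
  simp [wordOf]

lemma wordOf_succ (z : ℤ → B) (n : ℕ) : wordOf z (n + 1) = wordOf z n ++ [z n] := by
  simp [wordOf, List.range_succ]

lemma shift_iterate_apply (k : ℕ) (z : ℤ → B) (j : ℤ) : shift^[k] z j = z (j + k) := by
  induction k generalizing z with
  | zero => simp
  | succ k ih =>
    rw [Function.iterate_succ_apply, ih, shift]
    push_cast
    ring_nf

lemma mem_cyl_singleton {b : B} {z : ℤ → B} : z ∈ cyl [b] ↔ z 0 = b := by
  simp [cyl]

lemma count_wordOf_eq_birkhoffSum [BEq B] [LawfulBEq B] (b : B) (z : ℤ → B) (n : ℕ) :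
    ((wordOf z n).count b : ℝ) = birkhoffSum shift ((cyl [b]).indicator 1) n z := by
  induction n with
  | zero => simp [wordOf]
  | succ n ih =>
    rw [wordOf_succ, List.count_append, birkhoffSum_succ, Nat.cast_add, ih]
    by_cases h : z n = b <;> simp [mem_cyl_singleton, shift_iterate_apply, h]

lemma measurableSet_cyl_singleton [MeasurableSpace B] {b : B} (hb : MeasurableSet {b}) :
    MeasurableSet (cyl [b]) := by
  have : cyl [b] = (fun z : ℤ → B => z 0) ⁻¹' {b} := Set.ext fun _ => mem_cyl_singleton
  exact this ▸ measurable_pi_apply 0 hb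

end Words

lemma measurableSet_singleton_none {A : Type*} [MeasurableSpace A] :
    MeasurableSet ({none} : Set (Option A)) :=
  ⟨Set.range Sum.inr, measurableSet_range_inr, by ext o; cases o <;> simp [Option.elim']⟩

section PairSubstitution

variable {A : Type*} [DecidableEq A] (x y : A)

lemma length_pairExpand (l : List (Option A)) :
    (pairExpand x y l).length = l.length + l.count none := by
  induction l with
  | nil => rfl
  | cons o l ih => cases o <;> simp [pairExpand, ih] <;> omega

lemma length_pairSubst_add_count_none (l : List A) :
    (pairSubst x y l).length + (pairSubst x y l).count none = l.length := by
  induction l using pairSubst.induct x y with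
  | case1 => rfl
  | case2 a => rfl
  | case3 a b l h ih => simp [pairSubst, h]; omega
  | case4 a b l h ih => simp [pairSubst, h] at ih ⊢; omega

lemma pairSubst_ne_nil {l : List A} (h : l ≠ []) : pairSubst x y l ≠ [] := by
  match l with
  | [a] => simp [pairSubst]
  | a :: b :: l => unfold pairSubst; split <;> simp

lemma length_div_length_pairSubst {l : List A} (h : l ≠ []) :
    (l.length : ℝ) / (pairSubst x y l).length =
      1 + occ [none] (pairSubst x y l) / (pairSubst x y l).length := by
  have hpos : (0 : ℝ) < (pairSubst x y l).length := by
    exact_mod_cast List.length_pos_iff.2 (pairSubst_ne_nil x y h)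
  rw [occ_singleton, ← length_pairSubst_add_count_none x y l]
  field_simp
  push_cast
  ring

end PairSubstitution

theorem stmt_6_general {A : Type*} [DecidableEq A] [MeasurableSpace A] (x y : A) :
    (∀ ν : Measure (ℤ → Option A), IsProbabilityMeasure ν → Ergodic shift ν →
      ∀ᵐ z ∂ν, Tendsto
        (fun n : ℕ => ((pairExpand x y (wordOf z n)).length : ℝ) / (n : ℝ))
        atTop (𝓝 (1 + (ν (cyl [(none : Option A)])).toReal))) ∧
    (∀ μ : Measure (ℤ → A), IsProbabilityMeasure μ → Ergodic shift μ →
      ∀ ν : Measure (ℤ → Option A), IsProbabilityMeasure ν → Ergodic shift ν →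
      (∀ s : List (Option A), s ≠ [] →
        ∀ᵐ w ∂μ, Tendsto
          (fun n : ℕ =>
            (occ s (pairSubst x y (wordOf w n)) : ℝ) /
              ((pairSubst x y (wordOf w n)).length : ℝ))
          atTop (𝓝 ((ν (cyl s)).toReal))) →
      ∀ Z : ℝ,
        (∀ᵐ w ∂μ, Tendsto
          (fun n : ℕ => (n : ℝ) / ((pairSubst x y (wordOf w n)).length : ℝ))
          atTop (𝓝 Z)) →
        1 + (ν (cyl [(none : Option A)])).toReal = Z) := by
  refine ⟨fun ν _ hν => ?_, fun μ _ _ ν _ _ hfreq Z hZ => ?_⟩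
  · have hS := measurableSet_cyl_singleton (measurableSet_singleton_none (A := A))
    have hind (z : ℤ → Option A) :
        (cyl [none]).indicator (1 : (ℤ → Option A) → ℝ) z ∈ Set.Icc (0 : ℝ) 1 := by
      by_cases hz : z ∈ cyl [none] <;> simp [hz]
    filter_upwards [hν.ae_tendsto_birkhoffAverage (measurable_one.indicator hS) hind] with z hz
    rw [integral_indicator_one hS, measureReal_def] at hz
    refine (tendsto_const_nhds.add hz).congr' ?_
    filter_upwards [eventually_ne_atTop 0] with n hn
    rw [birkhoffAverage, smul_eq_mul, ← count_wordOf_eq_birkhoffSum, length_pairExpand,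
      length_wordOf]
    push_cast
    field_simp
  · obtain ⟨w, hw, hwZ⟩ := ((hfreq [none] (List.cons_ne_nil _ _)).and hZ).exists
    refine tendsto_nhds_unique ((tendsto_const_nhds.add hw).congr' ?_) hwZ
    filter_upwards [eventually_ne_atTop 0] with n hn
    have hw_ne : wordOf w n ≠ [] := List.length_pos_iff.1 (by simpa using Nat.pos_of_ne_zero hn)
    rw [← length_div_length_pairSubst x y hw_ne, length_wordOf]

/-- for every ergodic `ν`, `ν`-a.e. `|S(z₁…zₙ)|/n → 1 + ν(α)` (the mean
lengthening `W_α^ν`); moreover `W_α^{𝒢μ} = Z_{xy}^μ`, i.e. `1 + 𝒢μ(α) = Z_{xy}^μ`. -/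
theorem stmt_6 {A : Type*} [Fintype A] [DecidableEq A] [MeasurableSpace A]
    [MeasurableSingletonClass A] (x y : A) :
    (∀ ν : Measure (ℤ → Option A), IsProbabilityMeasure ν → Ergodic shift ν →
      ∀ᵐ z ∂ν, Tendsto
        (fun n : ℕ => ((pairExpand x y (wordOf z n)).length : ℝ) / (n : ℝ))
        atTop (𝓝 (1 + (ν (cyl [(none : Option A)])).toReal))) ∧
    (∀ μ : Measure (ℤ → A), IsProbabilityMeasure μ → Ergodic shift μ →
      ∀ ν : Measure (ℤ → Option A), IsProbabilityMeasure ν → Ergodic shift ν →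
      (∀ s : List (Option A), s ≠ [] →
        ∀ᵐ w ∂μ, Tendsto
          (fun n : ℕ =>
            (occ s (pairSubst x y (wordOf w n)) : ℝ) /
              ((pairSubst x y (wordOf w n)).length : ℝ))
          atTop (𝓝 ((ν (cyl s)).toReal))) →
      ∀ Z : ℝ,
        (∀ᵐ w ∂μ, Tendsto
          (fun n : ℕ => (n : ℝ) / ((pairSubst x y (wordOf w n)).length : ℝ))
          atTop (𝓝 Z)) →
        1 + (ν (cyl [(none : Option A)])).toReal = Z) :=
  stmt_6_general x y
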